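/- arXiv:2207.08682 — 11 statements merged into one kernel-verified Lean document; each statement's English description precedes it below -/
import Mathlib

section
/- Let k ≥ 2, m ≥ 1, and let t ≥ m be such that k divides C(t,m). Then every sequence S over ℤ/kℤ of length at least k(t−1) − m + 2 contains a subsequence S' of length t with e_m(S') ≡ 0 (mod k). In other words, EGZ_t^{(m)}(ℤ_k) ≤ (k−1)(t−1) + t − m + 1. -/
open Finset

/-- The `m`-th elementary symmetric expression of the subsequence of `g` selected
by the index set `J`. -/
def eSym {n : ℕ} {R : Type*} [CommRing R] (m : ℕ) (g : Fin n → R) (J : Finset (Fin n)) : R :=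
  ∑ T ∈ J.powersetCard m, ∏ i ∈ T, g i

lemma eSym_eq_zero_of_few_nonzero {n : ℕ} {R : Type*} [CommRing R] [DecidableEq R] {m : ℕ} {g : Fin n → R}
    {J : Finset (Fin n)} (h : (J.filter (fun i => g i ≠ 0)).card < m) :
    eSym m g J = 0 := by
  refine Finset.sum_eq_zero fun T hT => ?_
  rw [Finset.mem_powersetCard] at hT
  have hz : ∃ i ∈ T, g i = 0 := by
    by_contra hco
    push_neg at hco
    have hsub : T ⊆ J.filter (fun i => g i ≠ 0) :=
      fun i hi => Finset.mem_filter.mpr ⟨hT.1 hi, hco i hi⟩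
    have := Finset.card_le_card hsub
    omega
  obtain ⟨i, hi, hgi⟩ := hz
  exact Finset.prod_eq_zero hi hgi

theorem stmt_1 (k m t : ℕ) (hk : 2 ≤ k) (hm : 1 ≤ m) (htm : m ≤ t)
    (hdvd : k ∣ Nat.choose t m) (n : ℕ) (hn : k * (t - 1) - m + 2 ≤ n)
    (g : Fin n → ZMod k) :
    ∃ J : Finset (Fin n), J.card = t ∧ eSym m g J = 0 := by
  haveI : NeZero k := ⟨by omega⟩
  -- arithmetic facts
  have hK2 : 2 * (t - 1) ≤ k * (t - 1) := Nat.mul_le_mul_right _ hk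
  have hK' : (k - 1) * (t - 1) = k * (t - 1) - (t - 1) := Nat.sub_one_mul _ _
  by_cases hcase : ∃ a : ZMod k, t ≤ (univ.filter (fun i => g i = a)).card
  · obtain ⟨a, ha⟩ := hcase
    obtain ⟨J, hJsub, hJcard⟩ := Finset.exists_subset_card_eq ha
    refine ⟨J, hJcard, ?_⟩
    have hga : ∀ i ∈ J, g i = a := fun i hi => (Finset.mem_filter.mp (hJsub hi)).2
    unfold eSym
    have hconst : ∀ T ∈ J.powersetCard m, ∏ i ∈ T, g i = a ^ m := by
      intro T hT
      rw [Finset.mem_powersetCard] at hT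
      rw [Finset.prod_congr rfl (fun i hi => hga i (hT.1 hi)), Finset.prod_const, hT.2]
    rw [Finset.sum_congr rfl hconst, Finset.sum_const, Finset.card_powersetCard, hJcard,
      nsmul_eq_mul]
    have hc0 : ((t.choose m : ℕ) : ZMod k) = 0 :=
      (ZMod.natCast_eq_zero_iff _ _).mpr hdvd
    rw [hc0, zero_mul]
  · push_neg at hcase
    set Z := univ.filter (fun i : Fin n => g i = (0 : ZMod k)) with hZ
    set N := univ.filter (fun i : Fin n => g i ≠ (0 : ZMod k)) with hN
    have hsum : n = ∑ a ∈ (univ : Finset (ZMod k)), (univ.filter fun i : Fin n => g i = a).card := by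
      have := Finset.card_eq_sum_card_fiberwise
        (s := (univ : Finset (Fin n))) (t := (univ : Finset (ZMod k))) (f := g)
        (fun i _ => mem_univ _)
      simpa using this
    have hsplit : (univ.filter fun i : Fin n => g i = (0 : ZMod k)).card
        + ∑ a ∈ (univ : Finset (ZMod k)).erase 0, (univ.filter fun i : Fin n => g i = a).card
        = ∑ a ∈ (univ : Finset (ZMod k)), (univ.filter fun i : Fin n => g i = a).card :=
      Finset.add_sum_erase (univ : Finset (ZMod k))
        (f := fun a => (univ.filter fun i : Fin n => g i = a).card) (mem_univ (0 : ZMod k))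
    rw [← hZ] at hsplit
    have hbound : ∑ a ∈ (univ : Finset (ZMod k)).erase 0,
        (univ.filter fun i : Fin n => g i = a).card ≤ (k - 1) * (t - 1) := by
      calc ∑ a ∈ (univ : Finset (ZMod k)).erase 0, (univ.filter fun i : Fin n => g i = a).card
          ≤ ∑ _a ∈ (univ : Finset (ZMod k)).erase 0, (t - 1) :=
            Finset.sum_le_sum (fun a _ => by have := hcase a; omega)
        _ = (k - 1) * (t - 1) := by
            rw [Finset.sum_const, smul_eq_mul, Finset.card_erase_of_mem (mem_univ _),
              Finset.card_univ, ZMod.card]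
    have hZN : Z.card + N.card = n := by
      rw [hZ, hN]
      simpa using Finset.card_filter_add_card_filter_not
        (s := (univ : Finset (Fin n))) (p := fun i => g i = (0 : ZMod k))
    have hZbig : t + 1 ≤ Z.card + m := by omega
    obtain ⟨B, hBN, hBcard⟩ := Finset.exists_subset_card_eq
      (show min (m - 1) N.card ≤ N.card from min_le_right _ _)
    obtain ⟨A, hAZ, hAcard⟩ := Finset.exists_subset_card_eq
      (show t - B.card ≤ Z.card by omega)
    have hAzero : ∀ i ∈ A, g i = 0 := fun i hi => (Finset.mem_filter.mp (hAZ hi)).2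
    have hBnz : ∀ i ∈ B, g i ≠ 0 := fun i hi => (Finset.mem_filter.mp (hBN hi)).2
    have hdisj : Disjoint A B := Finset.disjoint_left.mpr
      (fun i hiA hiB => hBnz i hiB (hAzero i hiA))
    refine ⟨A ∪ B, ?_, ?_⟩
    · rw [Finset.card_union_of_disjoint hdisj, hAcard]
      omega
    · apply eSym_eq_zero_of_few_nonzero
      have hsub : (A ∪ B).filter (fun i => g i ≠ 0) ⊆ B := by
        intro i hi
        obtain ⟨hiU, hine⟩ := Finset.mem_filter.mp hi
        rcases Finset.mem_union.mp hiU with h | h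
        · exact absurd (hAzero i h) hine
        · exact h
      have := Finset.card_le_card hsub
      omega
end

section
/- Let G be a finite commutative ring and m, t positive integers with t ≥ m. Then EGZ_t^{(m)}(G) ≥ t + D^{(m)}(G) − m, where the inequality holds trivially if EGZ_t^{(m)}(G) = ∞. -/
open Finset

/-- The `m`-th degree Erdős–Ginzburg–Ziv constant of a finite commutative ring, as an
extended natural number (`⊤` if no finite bound exists). -/
noncomputable def EGZ (R : Type*) [CommRing R] (t m : ℕ) : ℕ∞ :=
  sInf ((Nat.cast : ℕ → ℕ∞) '' {z : ℕ | ∀ n : ℕ, z ≤ n → ∀ g : Fin n → R,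
    ∃ J : Finset (Fin n), J.card = t ∧ eSym m g J = 0})

/-- The `m`-th degree Davenport constant of a finite commutative ring. -/
noncomputable def Dav (R : Type*) [CommRing R] (m : ℕ) : ℕ∞ :=
  sInf ((Nat.cast : ℕ → ℕ∞) '' {z : ℕ | ∀ n : ℕ, z ≤ n → ∀ g : Fin n → R,
    ∃ J : Finset (Fin n), m ≤ J.card ∧ eSym m g J = 0})

/-!
If every sequence of length at least `z` has a length-`t` subsequence with `e_m = 0`, pad an
arbitrary sequence of length at least `z - (t - m)` with `t - m` zeros. A length-`t` subsequence
of the padded sequence with `e_m = 0` contains at least `m` terms of the original one, and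
dropping the zeros does not change `e_m`, since every `m`-term product through a zero vanishes.
Hence `D^{(m)} ≤ z - (t - m)`, while `t ≤ z` trivially.
-/

section

variable {R : Type*} [CommRing R]

theorem eSym_map {n N : ℕ} (m : ℕ) (e : Fin n ↪ Fin N) (g : Fin N → R) (J : Finset (Fin n)) :
    eSym m g (J.map e) = eSym m (g ∘ e) J := by
  simp only [eSym, powersetCard_map, sum_map]
  exact sum_congr rfl fun T _ ↦ prod_map T e g

theorem eSym_filter_of_eq_zero {n : ℕ} (m : ℕ) (g : Fin n → R) (J : Finset (Fin n))
    (p : Fin n → Prop) [DecidablePred p] (hg : ∀ i ∈ J, ¬ p i → g i = 0) :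
    eSym m g (J.filter p) = eSym m g J := by
  refine sum_subset (powersetCard_mono (filter_subset p J)) fun T hT hTp ↦ ?_
  rw [mem_powersetCard] at hT hTp
  obtain ⟨i, hiT, hip⟩ := not_subset.mp fun h ↦ hTp ⟨h, hT.2⟩
  have hiJ := hT.1 hiT
  exact prod_eq_zero hiT (hg i hiJ fun hi ↦ hip (mem_filter.mpr ⟨hiJ, hi⟩))

theorem eSym_preimage_of_eq_zero {n N : ℕ} (m : ℕ) (e : Fin n ↪ Fin N) (g : Fin N → R)
    (J : Finset (Fin N)) (hg : ∀ i ∉ Set.range e, g i = 0) :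
    eSym m (g ∘ e) (J.preimage e e.injective.injOn) = eSym m g J := by
  classical
  rw [← eSym_map, map_eq_image, image_preimage]
  exact eSym_filter_of_eq_zero m g J _ fun i _ ↦ hg i

end

theorem card_le_card_preimage_add {α β : Type*} [Fintype α] [Fintype β] (e : α ↪ β)
    (J : Finset β) :
    J.card ≤ (J.preimage e e.injective.injOn).card + (Fintype.card β - Fintype.card α) := by
  classical
  have hout : J.filter (· ∉ Set.range e) ⊆ (univ.map e)ᶜ := fun i hi ↦ by simp_all
  have := card_le_card hout
  rw [card_compl, card_map, card_univ] at this
  rw [card_preimage, ← card_filter_add_card_filter_not (p := (· ∈ Set.range e))]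
  omega

def IsEGZBound (R : Type*) [CommRing R] (t m z : ℕ) : Prop :=
  ∀ n : ℕ, z ≤ n → ∀ g : Fin n → R, ∃ J : Finset (Fin n), J.card = t ∧ eSym m g J = 0

def IsDavBound (R : Type*) [CommRing R] (m z : ℕ) : Prop :=
  ∀ n : ℕ, z ≤ n → ∀ g : Fin n → R, ∃ J : Finset (Fin n), m ≤ J.card ∧ eSym m g J = 0

namespace IsEGZBound

variable {R : Type*} [CommRing R] {t m z : ℕ}

theorem le (h : IsEGZBound R t m z) : t ≤ z := by
  obtain ⟨J, hJ, -⟩ := h z le_rfl 0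
  simpa [hJ] using J.card_le_univ

theorem isDavBound (h : IsEGZBound R t m z) (hmt : m ≤ t) : IsDavBound R m (z - (t - m)) := by
  intro n hn g
  obtain ⟨J, hJ, hJ0⟩ := h (n + (t - m)) (by omega) (Fin.append g 0)
  have hpad : ∀ i ∉ Set.range (Fin.castAddEmb (t - m)), Fin.append g 0 i = 0 := by
    intro i hi
    induction i using Fin.addCases with
    | left i => exact absurd ⟨i, rfl⟩ hi
    | right i => simp
  refine ⟨J.preimage _ (Fin.castAddEmb (t - m)).injective.injOn, ?_, ?_⟩
  · have := card_le_card_preimage_add (Fin.castAddEmb (t - m)) J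
    simp only [Fintype.card_fin] at this
    omega
  · have hg : Fin.append g 0 ∘ Fin.castAddEmb (t - m) = g := funext (Fin.append_left g 0)
    rw [← hJ0, ← eSym_preimage_of_eq_zero m _ _ J hpad, hg]

end IsEGZBound

theorem stmt_4_general (R : Type*) [CommRing R] (m t : ℕ) (ht : m ≤ t) :
    (t : ℕ∞) + Dav R m - (m : ℕ∞) ≤ EGZ R t m := by
  refine le_sInf ?_
  rintro _ ⟨z, hz : IsEGZBound R t m z, rfl⟩
  have hDav : Dav R m ≤ ((z - (t - m) : ℕ) : ℕ∞) := sInf_le ⟨_, hz.isDavBound ht, rfl⟩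
  have htz := hz.le
  calc (t : ℕ∞) + Dav R m - m
      ≤ (t : ℕ∞) + ((z - (t - m) : ℕ) : ℕ∞) - m := by gcongr
    _ = z := by norm_cast; omega

theorem stmt_4 (R : Type*) [CommRing R] [Fintype R] (m t : ℕ) (hm : 1 ≤ m) (ht : m ≤ t) :
    (t : ℕ∞) + Dav R m - (m : ℕ∞) ≤ EGZ R t m :=
  stmt_4_general R m t ht
end

section
/- Let p be prime and s, u nonnegative integers. The smallest integer ℓ ≥ p^u + 1 such that p^s divides C(ℓ, p^u) is ℓ = p^{s+u}. -/
/-!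
By Kummer's theorem, `v_p (C(n, k))` counts the carries in the base-`p` addition `k + (n - k)`.
There is no carry in the positions `i ≤ v_p k`, because `p ^ i ∣ k` there, and none beyond
`log_p n`; hence `v_p (C(n, k)) + v_p k ≤ log_p n`. For `n = ℓ < p ^ (s + u)` and `k = p ^ u` this
gives `v_p (C(ℓ, p ^ u)) < s`, while for `n = p ^ m` the bound is an equality,
`v_p (C(p ^ m, k)) = m - v_p k`.
-/

namespace Nat

open Finset

theorem factorization_choose_add_factorization_le_log {p n k : ℕ} (hp : p.Prime) (hkn : k ≤ n)
    (hk0 : k ≠ 0) : (choose n k).factorization p + k.factorization p ≤ log p n := by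
  have hdisj : Disjoint {i ∈ Ico 1 (log p n + 1) | p ^ i ≤ k % p ^ i + (n - k) % p ^ i}
      {i ∈ Ico 1 (log p n + 1) | p ^ i ∣ k} := by
    simp +contextual [Finset.disjoint_right, dvd_iff_mod_eq_zero, Nat.mod_lt _ (pow_pos hp.pos _)]
  have hk_lt : k < p ^ (log p n + 1) := hkn.trans_lt (lt_pow_succ_log_self hp.one_lt n)
  rw [factorization_choose hp hkn (lt_add_one _),
    factorization_eq_card_pow_dvd_of_lt hp (Nat.pos_of_ne_zero hk0) hk_lt,
    ← card_union_of_disjoint hdisj, filter_union_right]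
  simpa using (Ico 1 (log p n + 1)).card_filter_le
    fun i => p ^ i ≤ k % p ^ i + (n - k) % p ^ i ∨ p ^ i ∣ k

theorem not_prime_pow_dvd_choose_prime_pow {p s u n : ℕ} (hp : p.Prime) (hn : p ^ u ≤ n)
    (hn' : n < p ^ (s + u)) : ¬ p ^ s ∣ choose n (p ^ u) := by
  have hpu : p ^ u ≠ 0 := pow_ne_zero u hp.ne_zero
  rw [hp.pow_dvd_iff_le_factorization (choose_pos hn).ne']
  have hbound := factorization_choose_add_factorization_le_log hp hn hpu
  rw [factorization_pow_self hp] at hbound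
  have hlog : log p n < s + u := log_lt_of_lt_pow (by omega) hn'
  omega

theorem prime_pow_dvd_choose_prime_pow {p : ℕ} (hp : p.Prime) (s u : ℕ) :
    p ^ s ∣ choose (p ^ (s + u)) (p ^ u) := by
  have hle : p ^ u ≤ p ^ (s + u) := pow_le_pow_right₀ hp.one_le le_add_self
  rw [hp.pow_dvd_iff_le_factorization (choose_pos hle).ne',
    factorization_choose_prime_pow hp hle (pow_ne_zero u hp.ne_zero), factorization_pow_self hp]
  omega

end Nat

theorem stmt_5 (p : ℕ) (hp : p.Prime) (s u : ℕ) :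
    (∀ ℓ : ℕ, p ^ u + 1 ≤ ℓ → ℓ < p ^ (s + u) → ¬ (p ^ s ∣ Nat.choose ℓ (p ^ u))) ∧
      p ^ s ∣ Nat.choose (p ^ (s + u)) (p ^ u) :=
  ⟨fun _ hℓ hℓ' => Nat.not_prime_pow_dvd_choose_prime_pow hp (by omega) hℓ',
    Nat.prime_pow_dvd_choose_prime_pow hp s u⟩
end

section
/- For every positive integer m, the second-degree-2 Davenport constant of ℤ/2ℤ satisfies D^{(m)}(ℤ_2) = m + 2^{ν₂(m)}, where ν₂(m) is the 2-adic valuation of m. Concretely: (a) for m+1 ≤ j < m + 2^{ν₂(m)}, the binomial coefficient C(j, m) is odd; (b) C(m + 2^{ν₂(m)}, m) is even; (c) every sequence over ℤ/2ℤ of length m + 2^{ν₂(m)} contains a subsequence S' of length ≥ m with e_m(S') = 0 in ℤ/2ℤ, and there is a sequence of length m + 2^{ν₂(m)} − 1 with no such subsequence. -/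
/-!
By Kummer's theorem, `C(m + r, r)` is odd when `2 ^ ν₂(m) ∣ m` and `r < 2 ^ ν₂(m)` (no carries),
while adding `2 ^ ν₂(m)` to `m` carries at bit `ν₂(m)`, so `C(m + 2 ^ ν₂(m), m)` is even.

Over `ℤ/2ℤ`, `e_m` of a subsequence is `C(a, m)` where `a` is its number of ones. A sequence of
length `m + 2 ^ ν₂(m)` either has `m + 2 ^ ν₂(m)` ones, or enough zeros to complement at most
`m - 1` ones to a subsequence of length `≥ m`; the all-ones sequence one shorter has
`e_m = C(j, m)` odd on every subsequence of length `j ≥ m`.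
-/

open Finset

lemma not_dvd_choose_add_of_pow_dvd_of_lt {p k m r : ℕ} [Fact p.Prime] (hm : p ^ k ∣ m)
    (hr : r < p ^ k) : ¬ p ∣ (m + r).choose r := by
  rw [dvd_iff_padicValNat_ne_zero (Nat.choose_pos (Nat.le_add_left r m)).ne', not_not,
    padicValNat_choose' (lt_add_one _), card_eq_zero, filter_eq_empty_iff]
  intro i _
  have hpi : 0 < p ^ i := pow_pos (Fact.out : p.Prime).pos i
  have hm_lt : m % p ^ i < p ^ i := Nat.mod_lt m hpi
  -- `m % p ^ i` is a multiple of `q = p ^ min i k` below `p ^ i`, and `r % p ^ i < q`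
  have no_carry : ∀ q, q ∣ p ^ i → q ∣ m → r % p ^ i < q →
      r % p ^ i + m % p ^ i < p ^ i := by
    intro q hq_pi hq_m hr_q
    have : q ≤ p ^ i - m % p ^ i :=
      Nat.le_of_dvd (by omega) (Nat.dvd_sub hq_pi ((Nat.dvd_mod_iff hq_pi).2 hq_m))
    omega
  rcases le_total i k with h | h
  · exact not_le.2 <| no_carry _ dvd_rfl ((pow_dvd_pow p h).trans hm) (Nat.mod_lt r hpi)
  · exact not_le.2 <| no_carry _ (pow_dvd_pow p h) hm ((Nat.mod_le r _).trans_lt hr)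

lemma mod_two_pow_succ_padicValNat {m : ℕ} (hm : m ≠ 0) :
    m % 2 ^ (padicValNat 2 m + 1) = 2 ^ padicValNat 2 m := by
  set k := padicValNat 2 m
  obtain ⟨c, hc⟩ : 2 ^ k ∣ m := pow_padicValNat_dvd
  have hc_odd : c % 2 = 1 := by
    by_contra h
    refine pow_succ_padicValNat_not_dvd (p := 2) hm ⟨c / 2, ?_⟩
    rw [pow_succ, mul_assoc, Nat.mul_div_cancel' (by omega)]
    exact hc
  rw [hc, pow_succ, Nat.mul_mod_mul_left, hc_odd, mul_one]

lemma two_dvd_choose_add_two_pow_padicValNat {m : ℕ} (hm : m ≠ 0) :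
    2 ∣ (m + 2 ^ padicValNat 2 m).choose (2 ^ padicValNat 2 m) := by
  have hk := mod_two_pow_succ_padicValNat hm
  set k := padicValNat 2 m
  apply dvd_of_one_le_padicValNat
  rw [padicValNat_choose' (lt_add_one _), one_le_card]
  refine ⟨k + 1, mem_filter.2 ⟨mem_Ico.2 ⟨k.succ_pos, ?_⟩, ?_⟩⟩
  · calc k + 1 ≤ Nat.log 2 (m + 2 ^ k) := Nat.le_log_of_pow_le one_lt_two (by
        rw [pow_succ]; have := Nat.mod_le m (2 ^ (k + 1)); omega)
      _ < _ := lt_add_one _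
  · rw [hk, Nat.mod_eq_of_lt (Nat.pow_lt_pow_right one_lt_two k.lt_succ_self), pow_succ]
    omega

lemma eSym_eq_choose {n : ℕ} (m : ℕ) (g : Fin n → ZMod 2) (J : Finset (Fin n)) :
    eSym m g J = ((#{i ∈ J | g i = 1}).choose m : ZMod 2) := by
  have hone : ∀ i, g i ≠ 1 → g i = 0 := by
    intro i; generalize g i = x; revert x; decide
  rw [eSym, ← sum_subset (powersetCard_mono (filter_subset (fun i => g i = 1) J)),
    ← card_powersetCard, card_eq_sum_ones, Nat.cast_sum, Nat.cast_one]
  · exact sum_congr rfl fun T hT =>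
      prod_eq_one fun i hi => (mem_filter.1 ((mem_powersetCard.1 hT).1 hi)).2
  · intro T hTJ hTS
    obtain ⟨hTJ, hTm⟩ := mem_powersetCard.1 hTJ
    obtain ⟨i, hiT, hi⟩ := not_subset.1 fun h => hTS (mem_powersetCard.2 ⟨h, hTm⟩)
    exact prod_eq_zero hiT (hone i fun h1 => hi (mem_filter.2 ⟨hTJ hiT, h1⟩))

lemma exists_card_eq_eSym_eq_choose {n : ℕ} (m : ℕ) (g : Fin n → ZMod 2) {s t : ℕ}
    (hs : s ≤ #{i | g i = 1}) (ht : t ≤ #{i | g i ≠ 1}) :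
    ∃ J : Finset (Fin n), #J = s + t ∧ eSym m g J = (s.choose m : ZMod 2) := by
  obtain ⟨A, hA, rfl⟩ := exists_subset_card_eq hs
  obtain ⟨B, hB, rfl⟩ := exists_subset_card_eq ht
  have hdisj : Disjoint A B :=
    disjoint_left.2 fun i hiA hiB => (mem_filter.1 (hB hiB)).2 (mem_filter.1 (hA hiA)).2
  refine ⟨A ∪ B, card_union_of_disjoint hdisj, ?_⟩
  rw [eSym_eq_choose, filter_union, filter_true_of_mem fun i hi => (mem_filter.1 (hA hi)).2,
    filter_false_of_mem fun i hi => (mem_filter.1 (hB hi)).2, union_empty]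

theorem stmt_6 (m : ℕ) (hm : 1 ≤ m) :
    (∀ j : ℕ, m + 1 ≤ j → j < m + 2 ^ padicValNat 2 m → Odd (Nat.choose j m)) ∧
    Even (Nat.choose (m + 2 ^ padicValNat 2 m) m) ∧
    (∀ n : ℕ, m + 2 ^ padicValNat 2 m ≤ n → ∀ g : Fin n → ZMod 2,
      ∃ J : Finset (Fin n), m ≤ J.card ∧ eSym m g J = 0) ∧
    (∃ g : Fin (m + 2 ^ padicValNat 2 m - 1) → ZMod 2,
      ∀ J : Finset (Fin (m + 2 ^ padicValNat 2 m - 1)), m ≤ J.card → eSym m g J ≠ 0) := by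
  have hdvd : 2 ^ padicValNat 2 m ∣ m := pow_padicValNat_dvd
  have hcarry := two_dvd_choose_add_two_pow_padicValNat (show m ≠ 0 by omega)
  generalize padicValNat 2 m = k at *
  have hodd : ∀ j, m ≤ j → j < m + 2 ^ k → Odd (j.choose m) := by
    intro j hj hjk
    obtain ⟨r, rfl⟩ := Nat.exists_eq_add_of_le hj
    rw [Nat.choose_symm_add, ← Nat.not_even_iff_odd, even_iff_two_dvd]
    exact not_dvd_choose_add_of_pow_dvd_of_lt hdvd (by omega)
  have heven : Even ((m + 2 ^ k).choose m) := by
    rwa [Nat.choose_symm_add, even_iff_two_dvd]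
  refine ⟨fun j hj => hodd j (by omega), heven, fun n hn g => ?_, ⟨1, fun J hJ => ?_⟩⟩
  · have hcard : #{i | g i = 1} + #{i | g i ≠ 1} = n := by
      rw [card_filter_add_card_filter_not, card_univ, Fintype.card_fin]
    by_cases hones : m + 2 ^ k ≤ #{i | g i = 1}
    · obtain ⟨J, hJ, he⟩ := exists_card_eq_eSym_eq_choose m g hones (Nat.zero_le _)
      exact ⟨J, by omega, he.trans (ZMod.natCast_eq_zero_iff_even.2 heven)⟩
    · obtain ⟨J, hJ, he⟩ := exists_card_eq_eSym_eq_choose m g (min_le_right (m - 1) _) le_rfl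
      refine ⟨J, by omega, ?_⟩
      rw [he, Nat.choose_eq_zero_of_lt (by omega), Nat.cast_zero]
  · have hJle : #J ≤ m + 2 ^ k - 1 := by simpa using card_le_univ J
    have h2k : 1 ≤ 2 ^ k := Nat.one_le_two_pow
    rw [eSym_eq_choose, filter_true_of_mem fun i _ => Pi.one_apply i, ZMod.natCast_ne_zero_iff_odd]
    exact hodd #J hJ (by omega)
end

section
/- Let m be a positive integer and i an integer with i ≥ m + 2^{ν₂(m)}. Then there exists an integer j in the interval [i − 2^{ν₂(m)}, i] such that C(j, m) is even. -/
/-!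
Write `v = ν₂(m)`. The `v`-th binary digit of `m` is `1`, and by Lucas's theorem `C(j, m)` is
even as soon as the `v`-th binary digit of `j` is `0`. Such a `j` lies in every window
`[i - 2^v, i]`: either `⌊i / 2^v⌋` is even and `j = i` works, or it is odd and `j` can be taken
just below the multiple `2^v ⌊i / 2^v⌋`.
-/

open Finset

namespace Nat

theorem prime_dvd_choose_of_digit_lt {p n k : ℕ} [Fact p.Prime] (v : ℕ)
    (h : n / p ^ v % p < k / p ^ v % p) : p ∣ n.choose k := by
  have hlucas := Choose.choose_modEq_choose_mul_prod_range_choose (n := n) (k := k) (p := p) (v + 1)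
  have hprod : ∏ x ∈ range (v + 1), (n / p ^ x % p).choose (k / p ^ x % p) = 0 :=
    prod_eq_zero (self_mem_range_succ v) (choose_eq_zero_of_lt h)
  rw [hprod, Nat.cast_zero, mul_zero] at hlucas
  exact_mod_cast (Int.modEq_zero_iff_dvd).mp hlucas

theorem div_pow_padicValNat_mod_ne_zero {p m : ℕ} (hp : p.Prime) (hm : m ≠ 0) :
    m / p ^ padicValNat p m % p ≠ 0 := by
  rw [← factorization_def m hp, Ne, ← dvd_iff_mod_eq_zero]
  exact not_dvd_ordCompl hp hm

theorem exists_mem_Icc_even_div (i : ℕ) {d : ℕ} (hd : 0 < d) :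
    ∃ j, i - d ≤ j ∧ j ≤ i ∧ Even (j / d) := by
  rcases even_or_odd (i / d) with heven | ⟨k, hk⟩
  · exact ⟨i, Nat.sub_le i d, le_rfl, heven⟩
  · have hi : d * (2 * k) + d + i % d = i := by rw [← mul_add_one, ← hk, div_add_mod]
    have hdiv : (d * (2 * k) + (d - 1)) / d = 2 * k := by
      rw [mul_add_div hd, Nat.div_eq_of_lt (Nat.sub_lt hd one_pos), add_zero]
    have hmod := mod_lt i hd
    refine ⟨d * (2 * k) + (d - 1), ?_, ?_, by rw [hdiv]; exact even_two_mul k⟩ <;>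
      omega

end Nat

theorem stmt_7_general (m : ℕ) (hm : 1 ≤ m) (i : ℕ) :
    ∃ j : ℕ, i - 2 ^ padicValNat 2 m ≤ j ∧ j ≤ i ∧ Even (Nat.choose j m) := by
  obtain ⟨j, hij, hji, hjdigit⟩ := Nat.exists_mem_Icc_even_div i (Nat.two_pow_pos (padicValNat 2 m))
  have hmdigit := Nat.div_pow_padicValNat_mod_ne_zero Nat.prime_two (Nat.one_le_iff_ne_zero.mp hm)
  refine ⟨j, hij, hji, even_iff_two_dvd.mpr (Nat.prime_dvd_choose_of_digit_lt (padicValNat 2 m) ?_)⟩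
  rw [Nat.even_iff.mp hjdigit]
  omega

theorem stmt_7 (m : ℕ) (hm : 1 ≤ m) (i : ℕ) (hi : m + 2 ^ padicValNat 2 m ≤ i) :
    ∃ j : ℕ, i - 2 ^ padicValNat 2 m ≤ j ∧ j ≤ i ∧ Even (Nat.choose j m) :=
  stmt_7_general m hm i
end

section
/- Let m ≥ 1 and let t ≥ m be such that 2 divides C(t, m). Then EGZ_t^{(m)}(ℤ_2) = t + 2^{ν₂(m)}. That is: every sequence over ℤ/2ℤ of length t + 2^{ν₂(m)} contains a length-t subsequence S' with e_m(S') = 0 in ℤ/2ℤ, and there exists a sequence of length t + 2^{ν₂(m)} − 1 with no such subsequence. -/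
/-!
Over `ℤ/2ℤ`, the `m`-th elementary symmetric value of a subsequence containing `x` ones is
`C(x, m) mod 2`, so everything reduces to the parity of `C(x, m)` as `x` varies. Put
`a = ν₂(m)`, so bit `a` of `m` is set while the lower bits are clear. By Lucas' theorem,
`C(x, m)` is even as soon as bit `a` of `x` is clear, and `C(m + r, m)` is odd for `r < 2^a`.

If a sequence of length `t + 2^a` has `t` ones or `t` zeros, `C(t, m)` or `C(0, m)` is even.
Otherwise the admissible numbers of ones of a length-`t` subsequence form an interval of at least
`2^a + 1` consecutive values starting at some `lo`, and one of `lo`, `lo + 2^a` has bit `a` clear.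
Conversely, `m + 2^a - 1` ones followed by `t - m`
zeros force every length-`t` subsequence to have between `m` and `m + 2^a - 1` ones.
-/

open Finset

lemma eSym_eq_choose_card_filter {n : ℕ} {R : Type*} [CommRing R] [DecidableEq R] (m : ℕ)
    {g : Fin n → R} (hg : ∀ i, g i = 0 ∨ g i = 1) (J : Finset (Fin n)) :
    eSym m g J = ((#{i ∈ J | g i = 1}).choose m : R) := by
  have hprod : ∀ T ∈ J.powersetCard m,
      ∏ i ∈ T, g i = if T ∈ {i ∈ J | g i = 1}.powersetCard m then 1 else 0 := by
    intro T hT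
    obtain ⟨hTJ, hTm⟩ := mem_powersetCard.1 hT
    by_cases hT1 : ∀ i ∈ T, g i = 1
    · rw [if_pos (mem_powersetCard.2 ⟨fun i hi => mem_filter.2 ⟨hTJ hi, hT1 i hi⟩, hTm⟩)]
      exact prod_eq_one hT1
    · push Not at hT1
      obtain ⟨i, hi, hgi⟩ := hT1
      rw [if_neg fun h => hgi (mem_filter.1 ((mem_powersetCard.1 h).1 hi)).2,
        prod_eq_zero hi ((hg i).resolve_right hgi)]
  rw [eSym, sum_congr rfl hprod, sum_ite_mem,
    inter_eq_right.2 (powersetCard_mono (filter_subset _ _)), sum_const, card_powersetCard,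
    nsmul_one]

section CardFilter

variable {α : Type*} [Fintype α] (p : α → Prop) [DecidablePred p]

lemma exists_card_eq_card_filter_eq {t x : ℕ} (hx : x ≤ #{i | p i}) (hxt : x ≤ t)
    (htx : t - x ≤ #{i | ¬p i}) :
    ∃ J : Finset α, #J = t ∧ #{i ∈ J | p i} = x := by
  classical
  obtain ⟨A, hA, rfl⟩ := exists_subset_card_eq hx
  obtain ⟨B, hB, hBc⟩ := exists_subset_card_eq htx
  have hAp : ∀ i ∈ A, p i := fun i hi => (mem_filter.1 (hA hi)).2
  have hBp : ∀ i ∈ B, ¬p i := fun i hi => (mem_filter.1 (hB hi)).2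
  have hAB : Disjoint A B := disjoint_left.2 fun i hiA hiB => hBp i hiB (hAp i hiA)
  refine ⟨A ∪ B, by rw [card_union_of_disjoint hAB, hBc]; omega, ?_⟩
  rw [filter_union, filter_true_of_mem hAp, filter_false_of_mem hBp, union_empty]

lemma card_sub_card_filter_not_le_card_filter (J : Finset α) :
    #J - #{i | ¬p i} ≤ #{i ∈ J | p i} := by
  have hsplit : #{i ∈ J | p i} + #{i ∈ J | ¬p i} = #J := card_filter_add_card_filter_not _
  have hnot : #{i ∈ J | ¬p i} ≤ #{i | ¬p i} :=
    card_le_card (filter_subset_filter _ (subset_univ J))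
  omega

end CardFilter

section Lucas

variable {p : ℕ} [Fact p.Prime]

lemma dvd_choose_of_digit_lt {n k i : ℕ} (h : n / p ^ i % p < k / p ^ i % p) :
    p ∣ n.choose k := by
  have hmod := Choose.choose_modEq_choose_mul_prod_range_choose (p := p) (n := n) (k := k)
    (i + 1)
  rw [prod_range_succ, Nat.choose_eq_zero_of_lt h, mul_zero, Nat.cast_zero, mul_zero,
    Int.modEq_zero_iff_dvd] at hmod
  exact_mod_cast hmod

lemma choose_add_modEq_one {a k r : ℕ} (hk : p ^ a ∣ k) (hr : r < p ^ a) :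
    (k + r).choose k ≡ 1 [ZMOD p] := by
  have hpa : 0 < p ^ a := pow_pos (Fact.out : p.Prime).pos a
  have hdigit : ∀ i ∈ range a, ((k + r) / p ^ i % p).choose (k / p ^ i % p) = 1 := by
    intro i hi
    have hki : k % p ^ (i + 1) = 0 :=
      Nat.mod_eq_zero_of_dvd ((pow_dvd_pow p (mem_range.1 hi)).trans hk)
    rw [← Nat.mod_mul_right_div_self k, ← pow_succ, hki, Nat.zero_div, Nat.choose_zero_right]
  have hmod := Choose.choose_modEq_choose_mul_prod_range_choose (p := p) (n := k + r) (k := k) a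
  obtain ⟨k', rfl⟩ := hk
  rwa [prod_eq_one hdigit, Nat.mul_add_div hpa, Nat.div_eq_of_lt hr, add_zero,
    Nat.mul_div_cancel_left _ hpa, Nat.choose_self, Nat.cast_one, mul_one] at hmod

end Lucas

lemma div_two_pow_padicValNat_mod_two {m : ℕ} (hm : m ≠ 0) :
    m / 2 ^ padicValNat 2 m % 2 = 1 := by
  have h := Nat.not_dvd_ordCompl Nat.prime_two hm
  rw [Nat.factorization_def m Nat.prime_two] at h
  omega

lemma exists_two_dvd_choose_of_le_le_add {m : ℕ} (hm : m ≠ 0) (lo : ℕ) :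
    ∃ x, lo ≤ x ∧ x ≤ lo + 2 ^ padicValNat 2 m ∧ 2 ∣ x.choose m := by
  have : Fact (Nat.Prime 2) := ⟨Nat.prime_two⟩
  have hbit := div_two_pow_padicValNat_mod_two hm
  rcases Nat.mod_two_eq_zero_or_one (lo / 2 ^ padicValNat 2 m) with h | h
  · exact ⟨lo, le_rfl, Nat.le_add_right _ _,
      dvd_choose_of_digit_lt (i := padicValNat 2 m) (by omega)⟩
  · refine ⟨lo + 2 ^ padicValNat 2 m, Nat.le_add_right _ _, le_rfl,
      dvd_choose_of_digit_lt (i := padicValNat 2 m) ?_⟩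
    rw [Nat.add_div_right _ (by positivity)]
    omega

lemma exists_two_dvd_choose_of_add_le {m t k z : ℕ} (hm : 0 < m) (ht : 2 ∣ t.choose m)
    (hkz : t + 2 ^ padicValNat 2 m ≤ k + z) :
    ∃ x ≤ k, x ≤ t ∧ t - x ≤ z ∧ 2 ∣ x.choose m := by
  by_cases htk : t ≤ k
  · exact ⟨t, htk, le_rfl, by omega, ht⟩
  by_cases htz : t ≤ z
  · exact ⟨0, Nat.zero_le _, Nat.zero_le _, by omega, by simp [Nat.choose_eq_zero_of_lt hm]⟩
  obtain ⟨x, hlo, hhi, hx⟩ := exists_two_dvd_choose_of_le_le_add hm.ne' (t - z)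
  exact ⟨x, by omega, by omega, by omega, hx⟩

lemma not_two_dvd_choose_of_le_of_lt {m x : ℕ} (hmx : m ≤ x)
    (hx : x < m + 2 ^ padicValNat 2 m) : ¬2 ∣ x.choose m := by
  have : Fact (Nat.Prime 2) := ⟨Nat.prime_two⟩
  obtain ⟨r, rfl⟩ := Nat.exists_eq_add_of_le hmx
  have hodd : ((m + r).choose m : ℤ) % 2 = 1 :=
    choose_add_modEq_one pow_padicValNat_dvd (by omega : r < 2 ^ padicValNat 2 m)
  omega

theorem stmt_8 (m t : ℕ) (hm : 1 ≤ m) (htm : m ≤ t) (hdvd : 2 ∣ Nat.choose t m) :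
    (∀ n : ℕ, t + 2 ^ padicValNat 2 m ≤ n → ∀ g : Fin n → ZMod 2,
      ∃ J : Finset (Fin n), J.card = t ∧ eSym m g J = 0) ∧
    (∃ g : Fin (t + 2 ^ padicValNat 2 m - 1) → ZMod 2,
      ∀ J : Finset (Fin (t + 2 ^ padicValNat 2 m - 1)), J.card = t → eSym m g J ≠ 0) := by
  have h01 : ∀ x : ZMod 2, x = 0 ∨ x = 1 := by decide
  refine ⟨fun n hn g => ?_, ?_⟩
  · have hn' := card_filter_add_card_filter_not (s := univ) (fun i => g i = 1)
    rw [card_univ, Fintype.card_fin] at hn'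
    obtain ⟨x, hxk, hxt, htx, hx⟩ := exists_two_dvd_choose_of_add_le hm hdvd (hn'.symm ▸ hn)
    obtain ⟨J, hJ, hJx⟩ := exists_card_eq_card_filter_eq (fun i => g i = 1) hxk hxt htx
    refine ⟨J, hJ, ?_⟩
    rw [eSym_eq_choose_card_filter m (fun i => h01 (g i)), hJx, ZMod.natCast_eq_zero_iff]
    exact hx
  · set c := m + 2 ^ padicValNat 2 m - 1
    set N := t + 2 ^ padicValNat 2 m - 1
    refine ⟨fun i => if (i : ℕ) < c then 1 else 0, fun J hJ => ?_⟩
    rw [eSym_eq_choose_card_filter m (fun i => by split_ifs <;> simp), Ne,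
      ZMod.natCast_eq_zero_iff]
    simp only [ite_eq_left_iff, zero_ne_one, imp_false, not_not]
    have hones : #{i : Fin N | (i : ℕ) < c} = c := by rw [Fin.card_filter_val_lt]; omega
    have hsplit := card_filter_add_card_filter_not (s := univ) fun i : Fin N => (i : ℕ) < c
    rw [card_univ, Fintype.card_fin, hones] at hsplit
    have hlow := card_sub_card_filter_not_le_card_filter (fun i : Fin N => (i : ℕ) < c) J
    have hhigh :=
      card_le_card (filter_subset_filter (fun i : Fin N => (i : ℕ) < c) (subset_univ J))
    exact not_two_dvd_choose_of_le_of_lt (by omega) (by omega)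
end

section
/- Every sequence of 30 integers g₁,…,g₃₀ contains a subset J of exactly 16 indices such that Σ_{i<j, i,j∈J} g_i g_j ≡ 0 (mod 8). That is, EGZ_{16}^{(2)}(ℤ_8) ≤ 30. -/
/-
Replace each `g i` by its residue `w i ∈ [0, 8)` and, for `S ⊆ [30]`, put
`p S = ∑_{i < j ∈ S} w i w j` and `v S = C(p S + 7, 7) * C(|S| + 15, 15)`. By Kummer's theorem
`v S` is odd only if `8 ∣ p S` and `16 ∣ |S|`. Read on the Boolean cube `{0,1}³⁰`, `7! 15! v S`
is an integer polynomial in the indicator vector of `S` of degree `2 * 7 + 15 = 29 < 30`, so its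
alternating sum over the cube vanishes and `∑_S v S` is even. As `v ∅ = 1`, some nonempty `S`
has `v S` odd, and then `|S| = 16`.
-/

open Finset

open MvPolynomial

theorem Nat.pow_dvd_of_not_dvd_choose {p : ℕ} [Fact p.Prime] {k m : ℕ}
    (h : ¬ p ∣ (m + (p ^ k - 1)).choose (p ^ k - 1)) : p ^ k ∣ m := by
  rcases Nat.eq_zero_or_pos k with rfl | hk
  · simp
  have hpk : 0 < p ^ k := pow_pos (Fact.out : p.Prime).pos k
  -- Kummer: adding `m` to `p ^ k - 1` in base `p` carries into digit `k` unless `p ^ k ∣ m`.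
  have hv := padicValNat.eq_zero_of_not_dvd h
  rw [padicValNat_choose' (b := m + (p ^ k - 1) + k + 1)
    ((Nat.log_le_self p _).trans_lt (by omega)), Finset.card_eq_zero, filter_eq_empty_iff] at hv
  have hcarry := hv (x := k) (by simp; omega)
  rw [Nat.mod_eq_of_lt (by omega : p ^ k - 1 < p ^ k)] at hcarry
  generalize p ^ k = q at hpk hcarry ⊢
  exact Nat.dvd_of_mod_eq_zero (by omega)

lemma Finset.even_sum_of_sum_neg_one_pow_mul_eq_zero {ι : Type*} {s : Finset ι} {e v : ι → ℕ}
    (h : ∑ x ∈ s, (-1 : ℤ) ^ e x * v x = 0) : Even (∑ x ∈ s, v x) := by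
  have h2 := congrArg (Int.cast : ℤ → ZMod 2) h
  push_cast [CharTwo.neg_eq, one_pow, one_mul] at h2
  rw [← ZMod.natCast_eq_zero_iff_even]
  exact_mod_cast h2

section

variable {σ R : Type*}

lemma MvPolynomial.totalDegree_map_le {S : Type*} [CommSemiring R] [CommSemiring S] (f : R →+* S)
    (p : MvPolynomial σ R) : (map f p).totalDegree ≤ p.totalDegree :=
  sup_mono (support_map_subset f p)

lemma eval_prod_range_add_C (x : σ → ℕ) (P : MvPolynomial σ ℕ) (r : ℕ) :
    eval x (∏ t ∈ range r, (P + C (t + 1))) = r.factorial * (eval x P + r).choose r := by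
  simp only [map_prod, map_add, eval_C]
  rw [← Nat.ascFactorial_eq_factorial_mul_choose, Nat.ascFactorial_eq_prod_range]
  exact prod_congr rfl fun t _ => by ring

lemma totalDegree_prod_add_C_le {ι : Type*} [CommSemiring R] (P : MvPolynomial σ R)
    (s : Finset ι) (a : ι → R) : (∏ t ∈ s, (P + C (a t))).totalDegree ≤ #s * P.totalDegree := by
  refine (totalDegree_finsetProd _ _).trans ?_
  refine (sum_le_sum fun t _ => (totalDegree_add _ _).trans
      (max_le le_rfl ((totalDegree_C _).trans_le (Nat.zero_le _)))).trans ?_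
  simp

end

section BooleanCube

variable {σ R : Type*} [DecidableEq σ]

def cubePoint [Zero R] [One R] (S : Finset σ) : σ → R := fun i => if i ∈ S then 1 else 0

@[simp]
lemma cubePoint_empty [Zero R] [One R] : (cubePoint ∅ : σ → R) = 0 := by
  ext; simp [cubePoint]

lemma cubePoint_insert_of_ne [Zero R] [One R] {S : Finset σ} {i j : σ} (h : j ≠ i) :
    (cubePoint (insert i S) j : R) = cubePoint S j := by
  simp [cubePoint, h]

lemma comp_cubePoint {R' : Type*} [Semiring R] [Semiring R'] (f : R →+* R') (S : Finset σ) :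
    f ∘ cubePoint S = cubePoint S := by
  ext; simp [cubePoint, apply_ite f]

lemma prod_cubePoint [CommMonoidWithZero R] (S T : Finset σ) :
    ∏ i ∈ T, (cubePoint S i : R) = if T ⊆ S then 1 else 0 := by
  split_ifs with hTS
  · exact prod_eq_one fun i hi => by simp [cubePoint, hTS hi]
  · obtain ⟨i, hiT, hiS⟩ := not_subset.mp hTS
    exact prod_eq_zero hiT (by simp [cubePoint, hiS])

variable [Fintype σ]

lemma sum_neg_one_pow_card_mul_eq_zero [CommRing R] (i : σ) (f : Finset σ → R)
    (hf : ∀ S, i ∉ S → f (insert i S) = f S) :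
    ∑ S : Finset σ, (-1) ^ S.card * f S = 0 := by
  rw [← powerset_univ, ← insert_erase (mem_univ i),
    sum_powerset_insert (notMem_erase i univ), ← sum_add_distrib]
  refine sum_eq_zero fun S hS => ?_
  have hiS : i ∉ S := fun h => notMem_erase i univ (mem_powerset.mp hS h)
  rw [hf S hiS, card_insert_of_notMem hiS, pow_succ]
  ring

theorem sum_neg_one_pow_card_mul_eval_cubePoint_eq_zero [CommRing R] {F : MvPolynomial σ R}
    (hF : F.totalDegree < Fintype.card σ) :
    ∑ S : Finset σ, (-1) ^ S.card * eval (cubePoint S) F = 0 := by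
  simp_rw [eval_eq, mul_sum]
  rw [sum_comm]
  refine sum_eq_zero fun d hd => ?_
  obtain ⟨i, hi⟩ : ∃ i, d i = 0 := by
    by_contra! hpos
    have : Fintype.card σ ≤ F.totalDegree := calc
      Fintype.card σ = ∑ _i : σ, 1 := by simp
      _ ≤ ∑ i, d i := sum_le_sum fun i _ => Nat.one_le_iff_ne_zero.mpr (hpos i)
      _ = d.sum fun _ e => e := (Finsupp.sum_fintype d (fun _ e => e) fun _ => rfl).symm
      _ ≤ F.totalDegree := le_totalDegree hd
    omega
  refine sum_neg_one_pow_card_mul_eq_zero i _ fun S _ => ?_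
  congr 1
  refine prod_congr rfl fun j hj => ?_
  rw [cubePoint_insert_of_ne]
  rintro rfl
  exact Finsupp.mem_support_iff.mp hj hi

theorem sum_neg_one_pow_card_mul_prod_choose_eq_zero {ι : Type*} [Fintype ι]
    (P : ι → MvPolynomial σ ℕ) (r : ι → ℕ)
    (hdeg : ∑ j, r j * (P j).totalDegree < Fintype.card σ) :
    ∑ S : Finset σ, (-1 : ℤ) ^ S.card * ↑(∏ j, (eval (cubePoint S) (P j) + r j).choose (r j)) =
      0 := by
  set F : MvPolynomial σ ℕ := ∏ j, ∏ t ∈ range (r j), (P j + C (t + 1))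
  have hF : ∀ S, eval (cubePoint S) F =
      (∏ j, (r j).factorial) * ∏ j, (eval (cubePoint S) (P j) + r j).choose (r j) := fun S => by
    rw [map_prod, ← prod_mul_distrib]
    exact prod_congr rfl fun j _ => eval_prod_range_add_C _ _ _
  have hFdeg : (F.map (Nat.castRingHom ℤ)).totalDegree < Fintype.card σ := by
    refine ((totalDegree_map_le _ _).trans ((totalDegree_finsetProd _ _).trans
      (sum_le_sum fun j _ => ?_))).trans_lt hdeg
    exact (totalDegree_prod_add_C_le _ _ _).trans_eq (by rw [card_range])
  have h := sum_neg_one_pow_card_mul_eval_cubePoint_eq_zero hFdeg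
  simp_rw [← comp_cubePoint (Nat.castRingHom ℤ), ← map_eval, hF, map_mul, eq_natCast,
    mul_left_comm _ ((∏ j, (r j).factorial : ℕ) : ℤ), ← mul_sum] at h
  exact (mul_eq_zero.mp h).resolve_left (by positivity)

theorem exists_nonempty_forall_two_pow_dvd_eval_cubePoint {ι : Type*} [Fintype ι]
    (P : ι → MvPolynomial σ ℕ) (k : ι → ℕ) (h0 : ∀ j, constantCoeff (P j) = 0)
    (hdeg : ∑ j, (2 ^ k j - 1) * (P j).totalDegree < Fintype.card σ) :
    ∃ S : Finset σ, S.Nonempty ∧ ∀ j, 2 ^ k j ∣ eval (cubePoint S) (P j) := by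
  set v : Finset σ → ℕ := fun S =>
    ∏ j, (eval (cubePoint S) (P j) + (2 ^ k j - 1)).choose (2 ^ k j - 1)
  set odds : Finset (Finset σ) := {S | Odd (v S)}
  have hcard : Even #odds := (even_sum_iff_even_card_odd v).mp <|
    even_sum_of_sum_neg_one_pow_mul_eq_zero <| sum_neg_one_pow_card_mul_prod_choose_eq_zero P _ hdeg
  have hmem : ∅ ∈ odds := by simp [odds, v, h0]
  have htwo : 1 < #odds := by
    have := card_pos.mpr ⟨_, hmem⟩
    obtain ⟨c, hc⟩ := hcard
    omega
  obtain ⟨S, hS, hSne⟩ := exists_mem_ne htwo ∅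
  refine ⟨S, nonempty_iff_ne_empty.mpr hSne, fun j => Nat.pow_dvd_of_not_dvd_choose fun h2 => ?_⟩
  exact Nat.not_even_iff_odd.mpr (mem_filter.mp hS).2
    (even_iff_two_dvd.mpr (h2.trans (dvd_prod_of_mem _ (mem_univ j))))

end BooleanCube

section WeightedEsymm

variable {σ R : Type*} [Fintype σ] [CommSemiring R]

noncomputable def weightedEsymm (m : ℕ) (w : σ → R) : MvPolynomial σ R :=
  ∑ T ∈ powersetCard m univ, ∏ i ∈ T, C (w i) * X i

lemma eval_cubePoint_weightedEsymm [DecidableEq σ] (m : ℕ) (w : σ → R) (S : Finset σ) :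
    eval (cubePoint S) (weightedEsymm m w) = ∑ T ∈ powersetCard m S, ∏ i ∈ T, w i := by
  simp only [weightedEsymm, map_sum, map_prod, map_mul, eval_C, eval_X, prod_mul_distrib,
    prod_cubePoint]
  refine (sum_subset (powersetCard_mono (subset_univ S)) fun T hT hTS => ?_).symm.trans
    (sum_congr rfl fun T hT => by rw [if_pos (mem_powersetCard.mp hT).1, mul_one])
  rw [if_neg fun h => hTS (mem_powersetCard.mpr ⟨h, (mem_powersetCard.mp hT).2⟩), mul_zero]

lemma constantCoeff_weightedEsymm [DecidableEq σ] {m : ℕ} (hm : m ≠ 0) (w : σ → R) :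
    constantCoeff (weightedEsymm m w) = 0 := by
  rw [← eval_zero, ← cubePoint_empty, eval_cubePoint_weightedEsymm,
    powersetCard_eq_empty.mpr (by simpa [Nat.pos_iff_ne_zero]), sum_empty]

lemma totalDegree_weightedEsymm_le (m : ℕ) (w : σ → R) :
    (weightedEsymm m w).totalDegree ≤ m := by
  refine totalDegree_finsetSum_le fun T hT => (totalDegree_finsetProd _ _).trans ?_
  refine (sum_le_sum (g := fun _ => 1) fun i _ => ?_).trans_eq
    (by simp [(mem_powersetCard.mp hT).2])
  rw [C_mul_X_eq_monomial]
  exact (totalDegree_monomial_le _ _).trans_eq (by simp)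

end WeightedEsymm

theorem stmt_9 (g : Fin 30 → ℤ) :
    ∃ J : Finset (Fin 30), J.card = 16 ∧ (8 : ℤ) ∣ eSym 2 g J := by
  set w : Fin 30 → ℕ := fun i => (g i : ZMod 8).val
  obtain ⟨S, hS, hdvd⟩ := exists_nonempty_forall_two_pow_dvd_eval_cubePoint
    ![weightedEsymm 2 w, weightedEsymm 1 1] ![3, 4]
    (by simp [Fin.forall_fin_two, constantCoeff_weightedEsymm])
    (by
      have h2 := totalDegree_weightedEsymm_le 2 w
      have h1 := totalDegree_weightedEsymm_le (σ := Fin 30) (R := ℕ) 1 1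
      simp only [Fin.sum_univ_two, Fintype.card_fin, Matrix.cons_val_zero, Matrix.cons_val_one]
      omega)
  have h8 : 8 ∣ ∑ T ∈ S.powersetCard 2, ∏ i ∈ T, w i := by
    simpa [eval_cubePoint_weightedEsymm] using hdvd 0
  have h16 : 16 ∣ S.card := by simpa [eval_cubePoint_weightedEsymm] using hdvd 1
  refine ⟨S, ?_, (ZMod.intCast_zmod_eq_zero_iff_dvd _ 8).mp ?_⟩
  · have hle := card_le_univ S
    have hpos := hS.card_pos
    rw [Fintype.card_fin] at hle
    omega
  · simpa [eSym, w] using (ZMod.natCast_eq_zero_iff _ 8).mpr h8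
end

section
/- The sequence S = (0^{14}, 1^{15}) over ℤ/8ℤ (fourteen 0's and fifteen 1's, total length 29) contains no subsequence S' of length 16 with e₂(S') ≡ 0 (mod 8). Hence EGZ_{16}^{(2)}(ℤ_8) ≥ 30. -/
open Finset

theorem stmt_10 (g : Fin 29 → ZMod 8) (hg : ∀ i : Fin 29, g i = if (i : ℕ) < 14 then 0 else 1)
    (J : Finset (Fin 29)) (hJ : J.card = 16) :
    eSym 2 g J ≠ 0 := by
  classical
  set A : Finset (Fin 29) := J.filter (fun i => 14 ≤ (i : ℕ)) with hA
  have hAJ : A ⊆ J := Finset.filter_subset _ _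
  have hsub : ∀ T ∈ J.powersetCard 2, ∏ i ∈ T, g i = if T ⊆ A then 1 else 0 := by
    intro T hT
    rw [Finset.mem_powersetCard] at hT
    by_cases h : T ⊆ A
    · rw [if_pos h]
      apply Finset.prod_eq_one
      intro i hi
      have hiA := h hi
      rw [hA, Finset.mem_filter] at hiA
      rw [hg i, if_neg (by omega)]
    · rw [if_neg h]
      obtain ⟨i, hiT, hiA⟩ := Finset.not_subset.mp h
      apply Finset.prod_eq_zero hiT
      have hlt : (i : ℕ) < 14 := by
        by_contra hc
        exact hiA (Finset.mem_filter.mpr ⟨hT.1 hiT, by omega⟩)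
      rw [hg i, if_pos hlt]
  have hfe : (J.powersetCard 2).filter (fun T => T ⊆ A) = A.powersetCard 2 := by
    ext T
    simp only [Finset.mem_filter, Finset.mem_powersetCard]
    constructor
    · rintro ⟨⟨_, hc⟩, hTA⟩; exact ⟨hTA, hc⟩
    · rintro ⟨hTA, hc⟩; exact ⟨⟨hTA.trans hAJ, hc⟩, hTA⟩
  have hval : eSym 2 g J = (A.card.choose 2 : ZMod 8) := by
    rw [eSym, Finset.sum_congr rfl hsub, Finset.sum_boole, hfe,
      Finset.card_powersetCard]
  have hx1 : A.card ≤ 15 := by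
    have : A ⊆ Finset.univ.filter (fun i : Fin 29 => 14 ≤ (i : ℕ)) :=
      fun i hi => Finset.mem_filter.mpr ⟨Finset.mem_univ _, (Finset.mem_filter.mp hi).2⟩
    have := Finset.card_le_card this
    simpa using this.trans (by decide)
  have hx2 : 2 ≤ A.card := by
    have h1 : (J \ A) ⊆ Finset.univ.filter (fun i : Fin 29 => (i : ℕ) < 14) := by
      intro i hi
      rw [Finset.mem_sdiff] at hi
      refine Finset.mem_filter.mpr ⟨Finset.mem_univ _, ?_⟩
      by_contra hc
      exact hi.2 (Finset.mem_filter.mpr ⟨hi.1, by omega⟩)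
    have h2 := Finset.card_le_card h1
    have h3 : (Finset.univ.filter (fun i : Fin 29 => (i : ℕ) < 14)).card = 14 := by decide
    have h4 : (J \ A).card = J.card - A.card := Finset.card_sdiff_of_subset hAJ
    have h5 : A.card ≤ J.card := Finset.card_le_card hAJ
    omega
  rw [hval]
  interval_cases h : A.card <;> decide
end

section
/- Let p be a prime, G = ℤ_{p^{α₁}} ⊕ ⋯ ⊕ ℤ_{p^{α_r}}, h = α₁ + ⋯ + α_r, and m ≥ 1 with p^h > Σ_{j=1}^r m(p^{α_j} − 1). Then every sequence over G of length p^h + m Σ_{j=1}^r (p^{α_j} − 1) contains a subsequence S' of length exactly p^h such that e_m(S') is the zero element of G (where e_m is computed coordinate-wise). -/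
open Finset

/-!
Schauz–Brink on the Boolean cube: if `f : Finset ι → ℚ` is a combination of the monomials
`S ↦ [T ⊆ S]` with `|T| < |ι|`, then `∑_S (-1)^|S| f S = 0`. For ℕ-valued functions `f_k` of
degree `d_k`, the product `∏_k binom(f_k S + p^{a_k} - 1, p^{a_k} - 1)` has degree
`∑_k (p^{a_k} - 1) d_k` and, by Lucas's theorem, is `≡ [∀ k, p^{a_k} ∣ f_k S] (mod p)`. If that
degree is below `|ι|` the solutions therefore have signed count `0` in `ZMod p`, so the trivial
solution `∅` is not alone.

For the theorem take `|S|` (degree `1`, modulus `p^h`) and the integer lifts of the coordinates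
of `e_m` (degree `m`, moduli `p^{α_j}`): a nonempty solution has `p^h ∣ |S| < 2 p^h`.
-/

open Polynomial
open scoped Nat

theorem ZMod.natCast_choose_mul_add (p : ℕ) [Fact p.Prime] {u v : ℕ} (hu : u < p) (hv : v < p)
    (x y : ℕ) :
    ((p * x + u).choose (p * y + v) : ZMod p) = u.choose v * x.choose y := by
  have hp := (Fact.out : p.Prime).pos
  have h := (ZMod.natCast_eq_natCast_iff _ _ _).mpr
    (Choose.choose_modEq_choose_mod_mul_choose_div_nat (n := p * x + u) (k := p * y + v) (p := p))
  rw [h, Nat.mul_add_mod, Nat.mul_add_mod, Nat.mod_eq_of_lt hu, Nat.mod_eq_of_lt hv,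
    Nat.mul_add_div hp, Nat.mul_add_div hp, Nat.div_eq_of_lt hu, Nat.div_eq_of_lt hv,
    add_zero, add_zero, Nat.cast_mul]

theorem ZMod.natCast_choose_add_pow_sub_one (p : ℕ) [Fact p.Prime] (a s : ℕ) :
    ((s + (p ^ a - 1)).choose (p ^ a - 1) : ZMod p) = if p ^ a ∣ s then 1 else 0 := by
  have hp := (Fact.out : p.Prime).one_lt
  induction a generalizing s with
  | zero => simp
  | succ a ih =>
    have hpa : 0 < p ^ a := pow_pos (by omega) a
    -- peel off the lowest base-`p` digit of both arguments
    have hN : p ^ (a + 1) - 1 = p * (p ^ a - 1) + (p - 1) := by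
      rw [pow_succ, Nat.mul_sub, mul_one, mul_comm]
      have : p ≤ p * p ^ a := Nat.le_mul_of_pos_right p hpa
      omega
    obtain ⟨t, u, hu, rfl⟩ : ∃ t u, u < p ∧ s = p * t + u :=
      ⟨s / p, s % p, Nat.mod_lt s (by omega), (Nat.div_add_mod s p).symm⟩
    rw [hN]
    rcases Nat.eq_zero_or_pos u with rfl | hu0
    · rw [show p * t + 0 + (p * (p ^ a - 1) + (p - 1)) = p * (t + (p ^ a - 1)) + (p - 1) by ring,
        ZMod.natCast_choose_mul_add p (by omega) (by omega), Nat.choose_self, Nat.cast_one,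
        one_mul, ih, add_zero, pow_succ']
      simp only [Nat.mul_dvd_mul_iff_left (by omega : 0 < p)]
    · have hndvd : ¬ p ^ (a + 1) ∣ p * t + u := fun h => by
        have := (Nat.dvd_add_right (dvd_mul_right p t)).mp ((dvd_pow_self p a.succ_ne_zero).trans h)
        exact absurd (Nat.le_of_dvd hu0 this) (by omega)
      rw [show p * t + u + (p * (p ^ a - 1) + (p - 1)) = p * (t + p ^ a) + (u - 1) by
          zify [hpa, hu0, show 1 ≤ p by omega]; ring,
        ZMod.natCast_choose_mul_add p (by omega) (by omega), Nat.choose_eq_zero_of_lt (by omega),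
        if_neg hndvd, Nat.cast_zero, zero_mul]

namespace BooleanCube

variable {R ι : Type*} [CommRing R]

-- A point of the cube `{0,1}^ι` is its support `S : Finset ι`; `monomial T` is `∏_{i ∈ T} x_i`.
open Classical in
noncomputable def monomial (T : Finset ι) : Finset ι → R := fun S => if T ⊆ S then 1 else 0

variable (R ι) in
def degLE (d : ℕ) : Submodule R (Finset ι → R) :=
  Submodule.span R (monomial '' {T | T.card ≤ d})

lemma monomial_mem_degLE {T : Finset ι} {d : ℕ} (h : T.card ≤ d) :
    (monomial T : Finset ι → R) ∈ degLE R ι d :=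
  Submodule.subset_span ⟨T, h, rfl⟩

lemma degLE_mono {d e : ℕ} (h : d ≤ e) : degLE R ι d ≤ degLE R ι e :=
  Submodule.span_mono <| Set.image_mono fun _ hT => le_trans hT h

lemma one_mem_degLE (d : ℕ) : (1 : Finset ι → R) ∈ degLE R ι d := by
  convert monomial_mem_degLE (R := R) (T := ∅) (Nat.zero_le d)
  ext S
  simp [monomial]

lemma monomial_mul [DecidableEq ι] (T U : Finset ι) :
    (monomial T * monomial U : Finset ι → R) = monomial (T ∪ U) := by
  ext S
  by_cases hT : T ⊆ S <;> by_cases hU : U ⊆ S <;> simp [monomial, hT, hU, union_subset_iff]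

lemma mul_mem_degLE {f g : Finset ι → R} {d e : ℕ} (hf : f ∈ degLE R ι d)
    (hg : g ∈ degLE R ι e) : f * g ∈ degLE R ι (d + e) := by
  classical
  have hfg := Submodule.mul_mem_mul hf hg
  rw [degLE, degLE, Submodule.span_mul_span] at hfg
  refine Submodule.span_le.mpr ?_ hfg
  rintro _ ⟨_, ⟨T, hT, rfl⟩, _, ⟨U, hU, rfl⟩, rfl⟩
  change monomial T * monomial U ∈ degLE R ι (d + e)
  rw [monomial_mul]
  exact monomial_mem_degLE ((card_union_le T U).trans (Nat.add_le_add hT hU))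

lemma prod_mem_degLE {κ : Type*} (s : Finset κ) {f : κ → Finset ι → R} {d : κ → ℕ}
    (h : ∀ k ∈ s, f k ∈ degLE R ι (d k)) : ∏ k ∈ s, f k ∈ degLE R ι (∑ k ∈ s, d k) := by
  classical
  induction s using Finset.induction with
  | empty => simpa using one_mem_degLE 0
  | insert k s hk ih =>
    rw [prod_insert hk, sum_insert hk]
    exact mul_mem_degLE (h k (mem_insert_self k s)) (ih fun i hi => h i (mem_insert_of_mem hi))

lemma pow_mem_degLE {f : Finset ι → R} {d : ℕ} (hf : f ∈ degLE R ι d) (k : ℕ) :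
    f ^ k ∈ degLE R ι (k * d) := by
  simpa using prod_mem_degLE (range k) (f := fun _ => f) fun _ _ => hf

lemma eval_mem_degLE {f : Finset ι → R} {d : ℕ} (hf : f ∈ degLE R ι d) (P : R[X]) :
    (fun S => P.eval (f S)) ∈ degLE R ι (P.natDegree * d) := by
  have hP : (fun S => P.eval (f S)) = ∑ k ∈ range (P.natDegree + 1), P.coeff k • f ^ k := by
    ext S
    simp [eval_eq_sum_range]
  rw [hP]
  refine Submodule.sum_mem _ fun k hk => Submodule.smul_mem _ _ ?_
  exact degLE_mono (Nat.mul_le_mul_right d (Nat.lt_succ_iff.mp (mem_range.mp hk)))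
    (pow_mem_degLE hf k)

lemma card_mem_degLE [Fintype ι] : (fun S : Finset ι => (S.card : R)) ∈ degLE R ι 1 := by
  classical
  have h : (fun S : Finset ι => (S.card : R)) = ∑ i, monomial {i} := by
    ext S
    simp [monomial]
  rw [h]
  exact Submodule.sum_mem _ fun i _ => monomial_mem_degLE (card_singleton i).le

lemma esymm_mem_degLE [Fintype ι] (a : ι → R) (m : ℕ) :
    (fun S : Finset ι => ∑ T ∈ S.powersetCard m, ∏ i ∈ T, a i) ∈ degLE R ι m := by
  classical
  have h : (fun S : Finset ι => ∑ T ∈ S.powersetCard m, ∏ i ∈ T, a i)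
      = ∑ T ∈ univ.powersetCard m, (∏ i ∈ T, a i) • monomial T := by
    ext S
    have hS : S.powersetCard m = (univ.powersetCard m).filter (· ⊆ S) := by
      ext T
      simp [mem_powersetCard, and_comm]
    simp [hS, sum_filter, monomial]
  rw [h]
  exact Submodule.sum_mem _ fun T hT =>
    Submodule.smul_mem _ _ (monomial_mem_degLE (mem_powersetCard.mp hT).2.le)

lemma natCast_choose_mem_degLE {f : Finset ι → ℕ} {d : ℕ}
    (hf : (fun S => (f S : ℚ)) ∈ degLE ℚ ι d) (N : ℕ) :
    (fun S => ((f S + N).choose N : ℚ)) ∈ degLE ℚ ι (N * d) := by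
  have hf1 : (fun S => (f S : ℚ) + 1) ∈ degLE ℚ ι d :=
    Submodule.add_mem _ hf (one_mem_degLE d)
  have h : (fun S => ((f S + N).choose N : ℚ))
      = fun S => ((N ! : ℚ)⁻¹ • ascPochhammer ℚ N).eval ((f S : ℚ) + 1) := by
    ext S
    rw [eval_smul, ← Nat.cast_succ, ascPochhammer_nat_eq_natCast_ascFactorial,
      Nat.ascFactorial_eq_factorial_mul_choose, Nat.cast_mul, smul_eq_mul,
      inv_mul_cancel_left₀ (by positivity)]
  rw [h]
  refine degLE_mono (Nat.mul_le_mul_right d ?_) (eval_mem_degLE hf1 _)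
  exact (natDegree_smul_le _ _).trans (ascPochhammer_natDegree _ N).le

lemma sum_neg_one_pow_card_mul_monomial [Fintype ι] {T : Finset ι}
    (hT : T.card < Fintype.card ι) :
    ∑ S : Finset ι, (-1 : R) ^ S.card * monomial T S = 0 := by
  classical
  obtain ⟨i, -, hi⟩ := exists_mem_notMem_of_card_lt_card (t := univ) (by simpa using hT)
  rw [← powerset_univ, ← insert_erase (mem_univ i), sum_powerset_insert (notMem_erase i _),
    ← sum_add_distrib]
  refine sum_eq_zero fun S hS => ?_
  have hiS : i ∉ S := fun h => notMem_erase i univ (mem_powerset.mp hS h)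
  simp [card_insert_of_notMem hiS, monomial, subset_insert_iff_of_notMem hi, pow_succ]
  split_ifs <;> ring

lemma sum_neg_one_pow_card_mul_eq_zero [Fintype ι] {f : Finset ι → R} {d : ℕ}
    (hf : f ∈ degLE R ι d) (hd : d < Fintype.card ι) :
    ∑ S : Finset ι, (-1 : R) ^ S.card * f S = 0 := by
  induction hf using Submodule.span_induction with
  | mem _ h =>
    obtain ⟨T, hT, rfl⟩ := h
    exact sum_neg_one_pow_card_mul_monomial (lt_of_le_of_lt hT hd)
  | zero => simp
  | add f g _ _ hf hg => simp [mul_add, sum_add_distrib, hf, hg]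
  | smul c f _ hf => simp [mul_left_comm _ c, ← mul_sum, hf]

theorem sum_neg_one_pow_card_filter_forall_dvd_eq_zero {K : Type*} [Fintype ι] [Fintype K]
    (p : ℕ) [Fact p.Prime] (a d : K → ℕ) (f : K → Finset ι → ℕ)
    (hf : ∀ k, (fun S => (f k S : ℚ)) ∈ degLE ℚ ι (d k))
    (hdeg : ∑ k, (p ^ a k - 1) * d k < Fintype.card ι) :
    ∑ S with ∀ k, p ^ a k ∣ f k S, (-1 : ZMod p) ^ S.card = 0 := by
  classical
  set c : Finset ι → ℕ := fun S => ∏ k, (f k S + (p ^ a k - 1)).choose (p ^ a k - 1)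
  have hc : (fun S => (c S : ℚ)) ∈ degLE ℚ ι (∑ k, (p ^ a k - 1) * d k) := by
    simpa [c, ← prod_fn] using
      prod_mem_degLE univ fun k _ => natCast_choose_mem_degLE (hf k) (p ^ a k - 1)
  have hℤ : ∑ S : Finset ι, (-1 : ℤ) ^ S.card * c S = 0 := by
    exact_mod_cast sum_neg_one_pow_card_mul_eq_zero hc hdeg
  have hc_mod : ∀ S, (c S : ZMod p) = if ∀ k, p ^ a k ∣ f k S then 1 else 0 := fun S => by
    simp [c, ZMod.natCast_choose_add_pow_sub_one, prod_boole]
  simpa [sum_filter, hc_mod] using congrArg (Int.cast : ℤ → ZMod p) hℤ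

theorem exists_nonempty_forall_dvd {K : Type*} [Fintype ι] [Fintype K]
    (p : ℕ) [Fact p.Prime] (a d : K → ℕ) (f : K → Finset ι → ℕ)
    (hf : ∀ k, (fun S => (f k S : ℚ)) ∈ degLE ℚ ι (d k))
    (hdeg : ∑ k, (p ^ a k - 1) * d k < Fintype.card ι) (hf₀ : ∀ k, f k ∅ = 0) :
    ∃ S : Finset ι, S.Nonempty ∧ ∀ k, p ^ a k ∣ f k S := by
  classical
  by_contra! h
  have hsol : univ.filter (fun S : Finset ι => ∀ k, p ^ a k ∣ f k S) = {∅} := by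
    ext S
    simp only [mem_filter, mem_univ, true_and, mem_singleton]
    refine ⟨fun hS => not_nonempty_iff_eq_empty.mp fun hne => ?_, fun hS => by simp [hS, hf₀]⟩
    obtain ⟨k, hk⟩ := h S hne
    exact hk (hS k)
  simpa [hsol] using sum_neg_one_pow_card_filter_forall_dvd_eq_zero p a d f hf hdeg

end BooleanCube

theorem eSym_apply_eq_natCast_val {n r : ℕ} {q : Fin r → ℕ} [∀ j, NeZero (q j)] (m : ℕ)
    (g : Fin n → ∀ j, ZMod (q j)) (S : Finset (Fin n)) (j : Fin r) :
    eSym m g S j = ((∑ T ∈ S.powersetCard m, ∏ i ∈ T, (g i j).val : ℕ) : ZMod (q j)) := by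
  simp [eSym, Finset.sum_apply, Finset.prod_apply]

theorem exists_card_eq_and_eSym_eq_zero (p : ℕ) [Fact p.Prime] {r n : ℕ} (α : Fin r → ℕ)
    (h m : ℕ) (hm : 1 ≤ m) (hlow : p ^ h - 1 + m * ∑ j, (p ^ α j - 1) < n)
    (hhigh : n < 2 * p ^ h) (g : Fin n → ∀ j, ZMod (p ^ α j)) :
    ∃ J : Finset (Fin n), J.card = p ^ h ∧ eSym m g J = 0 := by
  set F : Fin r → Finset (Fin n) → ℕ := fun j S => ∑ T ∈ S.powersetCard m, ∏ i ∈ T, (g i j).val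
  set a : Option (Fin r) → ℕ := fun k => k.elim h α
  set d : Option (Fin r) → ℕ := fun k => k.elim 1 fun _ => m
  set f : Option (Fin r) → Finset (Fin n) → ℕ := fun k S => k.elim S.card fun j => F j S
  have hf : ∀ k, (fun S => (f k S : ℚ)) ∈ BooleanCube.degLE ℚ (Fin n) (d k) := by
    rintro (_ | j)
    · exact_mod_cast BooleanCube.card_mem_degLE
    · simpa [f, d, F] using BooleanCube.esymm_mem_degLE (fun i => ((g i j).val : ℚ)) m
  have hdeg : ∑ k, (p ^ a k - 1) * d k < Fintype.card (Fin n) := by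
    simpa [Fintype.sum_option, a, d, mul_sum, mul_comm] using hlow
  have hf₀ : ∀ k, f k ∅ = 0 := by
    rintro (_ | j)
    · simp [f]
    · simp [f, F]
      omega
  obtain ⟨S, hne, hdvd⟩ := BooleanCube.exists_nonempty_forall_dvd p a d f hf hdeg hf₀
  refine ⟨S, ?_, funext fun j => ?_⟩
  · obtain ⟨t, ht⟩ : p ^ h ∣ S.card := hdvd none
    have hS : S.card ≤ n := by simpa using card_le_univ S
    have ht₀ : t ≠ 0 := by rintro rfl; simp [hne.ne_empty] at ht
    have ht₂ : t < 2 := Nat.lt_of_mul_lt_mul_left (a := p ^ h) (by omega)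
    obtain rfl : t = 1 := by omega
    simpa using ht
  · rw [eSym_apply_eq_natCast_val, Pi.zero_apply, ZMod.natCast_eq_zero_iff]
    exact hdvd (some j)

theorem stmt_13_general (p : ℕ) (hp : p.Prime) (r : ℕ) (α : Fin r → ℕ)
    (m : ℕ) (hm : 1 ≤ m)
    (hbig : ∑ j, m * (p ^ α j - 1) < p ^ (∑ j, α j))
    (g : Fin (p ^ (∑ j, α j) + m * ∑ j, (p ^ α j - 1)) → (∀ j : Fin r, ZMod (p ^ α j))) :
    ∃ J : Finset (Fin (p ^ (∑ j, α j) + m * ∑ j, (p ^ α j - 1))),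
      J.card = p ^ (∑ j, α j) ∧ eSym m g J = 0 := by
  have := Fact.mk hp
  have hq : 0 < p ^ (∑ j, α j) := pow_pos hp.pos _
  rw [← mul_sum] at hbig
  exact exists_card_eq_and_eSym_eq_zero p α _ m hm (by omega) (by omega) g

theorem stmt_13 (p : ℕ) (hp : p.Prime) (r : ℕ) (α : Fin r → ℕ) (hα : ∀ j, 1 ≤ α j)
    (m : ℕ) (hm : 1 ≤ m)
    (hbig : ∑ j, m * (p ^ α j - 1) < p ^ (∑ j, α j))
    (g : Fin (p ^ (∑ j, α j) + m * ∑ j, (p ^ α j - 1)) → (∀ j : Fin r, ZMod (p ^ α j))) :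
    ∃ J : Finset (Fin (p ^ (∑ j, α j) + m * ∑ j, (p ^ α j - 1))),
      J.card = p ^ (∑ j, α j) ∧ eSym m g J = 0 :=
  stmt_13_general p hp r α m hm hbig g
end

section
/- Let p ≡ 3 (mod 4) be an odd prime. Then EGZ_p^{(2)}(ℤ_p) ≥ 2p, i.e., there is a sequence over ℤ/pℤ of length 2p − 1 containing no subsequence of length p on which e₂ vanishes mod p. -/
/-!
Take `p - 2` zeros, `p - 1` twos and two ones. Zeros do not affect `e₂`, and a subsequence of
length `p` contains `j ≤ p - 1` twos and `k ≤ 2` ones with `j + k ≥ 2`. From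
`2 e₂ = (∑ gᵢ)² - ∑ gᵢ²` we get `2 e₂ = (2j + k)² - (4j + k)`, which is `4j(j - 1)`, `4j²` or
`(2j + 1)² + 1` according as `k = 0, 1, 2`; none of these vanishes mod `p`, the last one because
`-1` is not a square mod `p ≡ 3 (mod 4)`.
-/

open Finset

section eSym

variable {n : ℕ} {R : Type*} [CommRing R] (g : Fin n → R)

theorem eSym_two_insert {a : Fin n} {J : Finset (Fin n)} (ha : a ∉ J) :
    eSym 2 g (insert a J) = eSym 2 g J + g a * ∑ i ∈ J, g i := by
  have hinj : Set.InjOn (insert a) (J.powersetCard 1 : Set (Finset (Fin n))) :=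
    fun T hT U hU hTU => by
      have hT' : a ∉ T := fun h => ha ((mem_powersetCard.1 hT).1 h)
      have hU' : a ∉ U := fun h => ha ((mem_powersetCard.1 hU).1 h)
      rw [← erase_insert hT', ← erase_insert hU', hTU]
  have hdisj : Disjoint (J.powersetCard 2) ((J.powersetCard 1).image (insert a)) := by
    refine disjoint_left.2 fun T hT hT' => ?_
    obtain ⟨U, -, rfl⟩ := mem_image.1 hT'
    exact ha ((mem_powersetCard.1 hT).1 (mem_insert_self a U))
  rw [eSym, powersetCard_succ_insert ha, sum_union hdisj, sum_image hinj, powersetCard_one,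
    sum_map, mul_sum]
  congr 1
  refine sum_congr rfl fun i hi => ?_
  rw [Function.Embedding.coeFn_mk, prod_insert (by simpa using fun h : a = i => ha (h ▸ hi)),
    prod_singleton]

theorem two_mul_eSym_two (J : Finset (Fin n)) :
    2 * eSym 2 g J = (∑ i ∈ J, g i) ^ 2 - ∑ i ∈ J, g i ^ 2 := by
  induction J using Finset.induction with
  | empty => simp [eSym, powersetCard_eq_empty.2 (by simp : #(∅ : Finset (Fin n)) < 2)]
  | insert a J ha ih =>
    rw [eSym_two_insert g ha, sum_insert ha, sum_insert ha]
    linear_combination ih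

end eSym

theorem Fin.card_le_of_forall_val_mem_Ico {n a b : ℕ} {K : Finset (Fin n)}
    (h : ∀ i ∈ K, a ≤ (i : ℕ) ∧ (i : ℕ) < b) : #K ≤ b - a := by
  simpa using card_le_card_of_injOn Fin.val (t := Ico a b) (fun i hi => mem_Ico.2 (h i hi))
    Fin.val_injective.injOn

namespace ZMod

theorem natCast_eq_natCast_iff_of_lt {p j m : ℕ} (hj : j < p) (hm : m < p) :
    (j : ZMod p) = m ↔ j = m := by
  rw [natCast_eq_natCast_iff', Nat.mod_eq_of_lt hj, Nat.mod_eq_of_lt hm]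

theorem two_ne_zero_of_mod_four_eq_three {p : ℕ} (hp4 : p % 4 = 3) : (2 : ZMod p) ≠ 0 := by
  have h := natCast_eq_natCast_iff_of_lt (p := p) (j := 2) (m := 0) (by omega) (by omega)
  exact_mod_cast h.not.2 (by omega)

end ZMod

theorem sq_two_mul_add_ne_four_mul_add {p : ℕ} [Fact p.Prime] (hp4 : p % 4 = 3) {j k : ℕ}
    (hj : j < p) (hk : k ≤ 2) (hjk : 2 ≤ j + k) : (2 * (j : ZMod p) + k) ^ 2 ≠ 4 * j + k := by
  have h2 := ZMod.two_ne_zero_of_mod_four_eq_three hp4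
  have hcast (m : ℕ) (hm : m < p) (h : (j : ZMod p) = m) : j = m :=
    (ZMod.natCast_eq_natCast_iff_of_lt hj hm).1 h
  intro h
  interval_cases k
  · have hj01 : (j : ZMod p) * (j - 1) = 0 := by
      have : (2 : ZMod p) ^ 2 * (j * (j - 1)) = 0 := by push_cast at h; linear_combination h
      simpa [h2] using this
    rcases mul_eq_zero.1 hj01 with h0 | h1
    · have := hcast 0 (by omega) (by simpa using h0)
      omega
    · have := hcast 1 (by omega) (by simpa [sub_eq_zero] using h1)
      omega
  · have h0 : (2 : ZMod p) ^ 2 * j ^ 2 = 0 := by push_cast at h; linear_combination h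
    have := hcast 0 (by omega) (by simpa [h2] using h0)
    omega
  · have hsq : IsSquare (-1 : ZMod p) := ⟨2 * j + 1, by push_cast at h; linear_combination -h⟩
    exact (ZMod.exists_sq_eq_neg_one_iff.1 hsq) hp4

def zerosTwosOnes (p : ℕ) : Fin (2 * p - 1) → ZMod p :=
  fun i => if (i : ℕ) < p - 2 then 0 else if (i : ℕ) < 2 * p - 3 then 2 else 1

section zerosTwosOnes

variable {p : ℕ} (J : Finset (Fin (2 * p - 1)))

def twos : Finset (Fin (2 * p - 1)) :=
  J.filter fun i => p - 2 ≤ (i : ℕ) ∧ (i : ℕ) < 2 * p - 3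

def ones : Finset (Fin (2 * p - 1)) :=
  J.filter fun i => 2 * p - 3 ≤ (i : ℕ)

theorem sum_zerosTwosOnes_pow {r : ℕ} (hr : r ≠ 0) :
    ∑ i ∈ J, zerosTwosOnes p i ^ r = 2 ^ r * #(twos J) + #(ones J) := by
  have hpow (i : Fin (2 * p - 1)) : zerosTwosOnes p i ^ r =
      2 ^ r * (if p - 2 ≤ (i : ℕ) ∧ (i : ℕ) < 2 * p - 3 then 1 else 0) +
        if 2 * p - 3 ≤ (i : ℕ) then 1 else 0 := by
    unfold zerosTwosOnes
    split_ifs <;> first | omega | simp [hr]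
  simp only [hpow, sum_add_distrib, ← mul_sum, sum_boole, twos, ones]

theorem card_twos_le : #(twos J) ≤ p - 1 :=
  (Fin.card_le_of_forall_val_mem_Ico fun _ hi => (mem_filter.1 hi).2).trans (by omega)

theorem card_ones_le : #(ones J) ≤ 2 :=
  (Fin.card_le_of_forall_val_mem_Ico (b := 2 * p - 1)
    fun i hi => ⟨(mem_filter.1 hi).2, i.isLt⟩).trans (by omega)

theorem two_le_card_twos_add_card_ones (hp : 2 ≤ p) (hJ : #J = p) :
    2 ≤ #(twos J) + #(ones J) := by
  set zeros := J.filter fun i : Fin (2 * p - 1) => (i : ℕ) < p - 2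
  have hzeros : #zeros ≤ p - 2 := by
    simpa using Fin.card_le_of_forall_val_mem_Ico (a := 0) fun i (hi : i ∈ zeros) =>
      ⟨Nat.zero_le _, (mem_filter.1 hi).2⟩
  have hcover : J ⊆ zeros ∪ twos J ∪ ones J := by
    intro i hi
    simp only [zeros, twos, ones, mem_union, mem_filter, hi, true_and]
    omega
  have := card_le_card hcover
  have := card_union_le (zeros ∪ twos J) (ones J)
  have := card_union_le zeros (twos J)
  omega

end zerosTwosOnes

theorem stmt_16 (p : ℕ) (hp : p.Prime) (hp4 : p % 4 = 3) :
    ∃ g : Fin (2 * p - 1) → ZMod p,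
      ∀ J : Finset (Fin (2 * p - 1)), J.card = p → eSym 2 g J ≠ 0 := by
  have := Fact.mk hp
  refine ⟨zerosTwosOnes p, fun J hJ he => ?_⟩
  have hsum : ∑ i ∈ J, zerosTwosOnes p i = 2 * #(twos J) + #(ones J) := by
    simpa using sum_zerosTwosOnes_pow J one_ne_zero
  have h2e := two_mul_eSym_two (zerosTwosOnes p) J
  rw [he, mul_zero, hsum, sum_zerosTwosOnes_pow J two_ne_zero] at h2e
  refine sq_two_mul_add_ne_four_mul_add hp4 ((card_twos_le J).trans_lt (by omega))
    (card_ones_le J) (two_le_card_twos_add_card_ones J (by omega) hJ) ?_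
  linear_combination -h2e
end

section
/- Let q be a prime power with gcd(q, 3) = 1. Then EGZ_q^{(3)}(ℤ_q) ≥ 2q − 3, i.e., there exists a sequence over ℤ/qℤ of length 2q − 4 containing no subsequence of length q on which the third elementary symmetric polynomial vanishes mod q. -/
/-!
Take `q - 3` zeros followed by `q - 1` ones. Any `q` of these terms include `ℓ` ones with
`3 ≤ ℓ < q`, and `e₃` of such a subsequence is `C(ℓ, 3)`. For `q = p ^ k` the `p`-adic valuation
of a binomial coefficient `C(ℓ, j)` is at most `log_p ℓ < k` (Kummer), so `q ∤ C(ℓ, 3)`.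
-/

open Finset

theorem Finset.filter_powersetCard_forall {α : Type*} (s : Finset α) (p : α → Prop)
    [DecidablePred p] (m : ℕ) :
    (s.powersetCard m).filter (fun T => ∀ i ∈ T, p i) = (s.filter p).powersetCard m := by
  ext T
  simp only [mem_filter, mem_powersetCard, subset_iff]
  grind

theorem Finset.sum_powersetCard_prod_boole {α R : Type*} [CommSemiring R] (s : Finset α)
    (p : α → Prop) [DecidablePred p] (m : ℕ) :
    ∑ T ∈ s.powersetCard m, ∏ i ∈ T, (if p i then (1 : R) else 0) =
      ((s.filter p).card.choose m : R) := by
  simp only [prod_boole, sum_boole, filter_powersetCard_forall, card_powersetCard]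

theorem eSym_boole {n : ℕ} {R : Type*} [CommRing R] (m : ℕ) (p : Fin n → Prop)
    [DecidablePred p] (J : Finset (Fin n)) :
    eSym m (fun i => if p i then (1 : R) else 0) J = ((J.filter p).card.choose m : R) :=
  J.sum_powersetCard_prod_boole p m

theorem IsPrimePow.not_dvd_choose {q ℓ j : ℕ} (hq : IsPrimePow q) (hℓq : ℓ < q)
    (hjℓ : j ≤ ℓ) : ¬ q ∣ ℓ.choose j := by
  obtain ⟨p, k, hp, hk0, rfl⟩ := hq
  intro hdvd
  have hℓ : ℓ ≠ 0 := by
    rintro rfl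
    simp_all [Nat.le_zero.mp hjℓ, hp.nat_prime.one_lt.ne', hk0.ne']
  have hk : k ≤ (ℓ.choose j).factorization p :=
    (hp.nat_prime.pow_dvd_iff_le_factorization (Nat.choose_pos hjℓ).ne').mp hdvd
  exact (Nat.log_lt_of_lt_pow hℓ hℓq).not_ge (hk.trans Nat.factorization_choose_le_log)

theorem Fin.card_filter_le_val (n m : ℕ) : #{i : Fin n | m ≤ i.val} = n - m := by
  have h := card_filter_add_card_filter_not (s := (univ : Finset (Fin n)))
    (fun i : Fin n => m ≤ i.val)
  simp only [not_le, Fin.card_filter_val_lt, card_univ, Fintype.card_fin] at h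
  omega

theorem Fin.card_filter_le_val_bounds {n : ℕ} (J : Finset (Fin n)) (m : ℕ) :
    #J - m ≤ #{i ∈ J | m ≤ i.val} ∧ #{i ∈ J | m ≤ i.val} ≤ n - m := by
  have hsplit := card_filter_add_card_filter_not (s := J) (fun i : Fin n => m ≤ i.val)
  have hle : #{i ∈ J | m ≤ i.val} ≤ n - m :=
    (card_le_card (filter_subset_filter _ (subset_univ J))).trans (Fin.card_filter_le_val n m).le
  have hlt : #{i ∈ J | ¬ m ≤ i.val} ≤ min n m := by
    refine (card_le_card (filter_subset_filter _ (subset_univ J))).trans ?_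
    simp only [not_le, Fin.card_filter_val_lt, le_refl]
  omega

theorem stmt_17_general (q : ℕ) (hq : IsPrimePow q) :
    ∃ g : Fin (2 * q - 4) → ZMod q,
      ∀ J : Finset (Fin (2 * q - 4)), J.card = q → eSym 3 g J ≠ 0 := by
  refine ⟨fun i => if q - 3 ≤ (i : ℕ) then 1 else 0, fun J hJ => ?_⟩
  have hJn : #J ≤ 2 * q - 4 := by simpa using card_le_univ J
  have hq1 := hq.one_lt
  obtain ⟨hlo, hhi⟩ := Fin.card_filter_le_val_bounds J (q - 3)
  rw [eSym_boole, Ne, ZMod.natCast_eq_zero_iff]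
  exact hq.not_dvd_choose (by omega) (by omega)

theorem stmt_17 (q : ℕ) (hq : IsPrimePow q) (hq3 : Nat.gcd q 3 = 1) :
    ∃ g : Fin (2 * q - 4) → ZMod q,
      ∀ J : Finset (Fin (2 * q - 4)), J.card = q → eSym 3 g J ≠ 0 :=
  stmt_17_general q hq
end
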